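/- arXiv:2303.17110 — 6 statements merged into one kernel-verified Lean document; each statement's English description precedes it below -/
import Mathlib

section
/- Let μ, μ' be in [0,1]^K and define the disjunctive cascading reward r(μ) = 1 - prod_{j=1}^K (1-μ_j) and triggering probabilities p_i(μ) = prod_{j=1}^{i-1} (1-μ_j). Then |r(μ') - r(μ)| <= sum_{i=1}^K p_i(μ) |μ_i - μ'_i|. -/
/-!
Telescoping, `∏ y - ∏ x = ∑ᵢ (yᵢ - xᵢ) · ∏_{j<i} xⱼ · ∏_{j>i} yⱼ`; the prefix products are
nonnegative and the suffix products have absolute value at most `1`. Apply this to the factors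
`xⱼ = 1 - μⱼ` and `yⱼ = 1 - μ'ⱼ`.
-/

open Finset

theorem abs_prod_sub_prod_le {ι R : Type*} [CommRing R] [LinearOrder R] [IsStrictOrderedRing R]
    [LinearOrder ι] (s : Finset ι) {x y : ι → R} (hx : ∀ i ∈ s, 0 ≤ x i)
    (hy : ∀ i ∈ s, |y i| ≤ 1) :
    |∏ i ∈ s, y i - ∏ i ∈ s, x i| ≤ ∑ i ∈ s, (∏ j ∈ s with j < i, x j) * |y i - x i| := by
  have htelescope := prod_sub_ordered s y (y - x)
  simp only [Pi.sub_apply, sub_sub_cancel] at htelescope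
  rw [htelescope, sub_sub_cancel]
  refine (abs_sum_le_sum_abs _ _).trans (sum_le_sum fun i _ => ?_)
  have hprefix : 0 ≤ ∏ j ∈ s with j < i, x j :=
    prod_nonneg fun j hj => hx j (mem_filter.1 hj).1
  have hsuffix : |∏ j ∈ s with i < j, y j| ≤ 1 := by
    rw [abs_prod]
    exact prod_le_one (fun j _ => abs_nonneg _) fun j hj => hy j (mem_filter.1 hj).1
  calc |(y i - x i) * (∏ j ∈ s with j < i, x j) * ∏ j ∈ s with i < j, y j|
      = (∏ j ∈ s with j < i, x j) * |y i - x i| * |∏ j ∈ s with i < j, y j| := by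
        rw [abs_mul, abs_mul, abs_of_nonneg hprefix]; ring
    _ ≤ (∏ j ∈ s with j < i, x j) * |y i - x i| :=
        mul_le_of_le_one_right (by positivity) hsuffix

theorem stmt_3 (K : ℕ) (μ μ' : Fin K → ℝ)
    (hμ : ∀ j, μ j ∈ Set.Icc (0:ℝ) 1) (hμ' : ∀ j, μ' j ∈ Set.Icc (0:ℝ) 1) :
    |(1 - ∏ j, (1 - μ' j)) - (1 - ∏ j, (1 - μ j))| ≤
      ∑ i, (∏ j ∈ Finset.Iio i, (1 - μ j)) * |μ i - μ' i| := by
  have h := abs_prod_sub_prod_le univ (x := fun j => 1 - μ j) (y := fun j => 1 - μ' j)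
    (fun j _ => sub_nonneg.2 (hμ j).2)
    (fun j _ => abs_le.2 ⟨by linarith [(hμ' j).2], by linarith [(hμ' j).1]⟩)
  rw [sub_sub_sub_cancel_left, abs_sub_comm]
  simpa only [filter_gt_eq_Iio, sub_sub_sub_cancel_left] using h
end

section
/- Let μ, μ' be in [0,1]^K and define for each i the disjunctive triggering probability p_i(μ) = prod_{j=1}^{i-1} (1-μ_j). Then for every i, |p_i(μ') - p_i(μ)| <= sum_{j=1}^{i-1} p_j(μ) |μ_j - μ'_j|, and in particular |p_i(μ') - p_i(μ)| <= sum_{j=1}^K p_j(μ) |μ_j - μ'_j|. -/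
open Finset

theorem abs_prod_sub_prod_le_sum {ι R : Type*} [LinearOrder ι] [CommRing R] [LinearOrder R]
    [IsStrictOrderedRing R] (s : Finset ι) (x y : ι → R) (hx : ∀ j, |x j| ≤ 1)
    (hy : ∀ j, 0 ≤ y j) :
    |∏ j ∈ s, x j - ∏ j ∈ s, y j| ≤ ∑ j ∈ s, (∏ l ∈ s with l < j, y l) * |x j - y j| := by
  classical
  induction s using Finset.induction_on_max with
  | empty => simp
  | insert a s hlt ih =>
    have ha : a ∉ s := fun h => lt_irrefl a (hlt a h)
    have hfilter_a : {l ∈ insert a s | l < a} = s := by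
      rw [filter_insert, if_neg (lt_irrefl a), filter_true_of_mem hlt]
    have hfilter_s : ∀ j ∈ s, {l ∈ insert a s | l < j} = {l ∈ s | l < j} := fun j hj => by
      rw [filter_insert, if_neg (lt_asymm (hlt j hj))]
    rw [prod_insert ha, prod_insert ha, sum_insert ha, hfilter_a, sum_congr rfl fun j hj => by
      rw [hfilter_s j hj]]
    have hY : 0 ≤ ∏ l ∈ s, y l := prod_nonneg fun l _ => hy l
    calc |x a * ∏ j ∈ s, x j - y a * ∏ j ∈ s, y j|
        = |x a * (∏ j ∈ s, x j - ∏ j ∈ s, y j) + (∏ l ∈ s, y l) * (x a - y a)| := by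
          congr 1; ring
      _ ≤ |x a| * |∏ j ∈ s, x j - ∏ j ∈ s, y j| + (∏ l ∈ s, y l) * |x a - y a| := by
          rw [← abs_of_nonneg hY, ← abs_mul, ← abs_mul, abs_of_nonneg hY]
          exact abs_add_le _ _
      _ ≤ 1 * |∏ j ∈ s, x j - ∏ j ∈ s, y j| + (∏ l ∈ s, y l) * |x a - y a| := by
          gcongr; exact hx a
      _ ≤ _ := by rw [one_mul, add_comm]; gcongr

theorem stmt_4 (K : ℕ) (μ μ' : Fin K → ℝ)
    (hμ : ∀ j, μ j ∈ Set.Icc (0:ℝ) 1) (hμ' : ∀ j, μ' j ∈ Set.Icc (0:ℝ) 1) :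
    ∀ i : Fin K,
      |(∏ j ∈ Finset.Iio i, (1 - μ' j)) - ∏ j ∈ Finset.Iio i, (1 - μ j)| ≤
          ∑ j ∈ Finset.Iio i, (∏ l ∈ Finset.Iio j, (1 - μ l)) * |μ j - μ' j| ∧
        |(∏ j ∈ Finset.Iio i, (1 - μ' j)) - ∏ j ∈ Finset.Iio i, (1 - μ j)| ≤
          ∑ j, (∏ l ∈ Finset.Iio j, (1 - μ l)) * |μ j - μ' j| := by
  intro i
  have habs_one_sub_μ' : ∀ j, |1 - μ' j| ≤ 1 := fun j => by
    rw [abs_le]; constructor <;> linarith [(hμ' j).1, (hμ' j).2]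
  have hone_sub_μ_nonneg : ∀ j, 0 ≤ 1 - μ j := fun j => sub_nonneg.2 (hμ j).2
  have hprefix : ∀ j ∈ Iio i, {l ∈ Iio i | l < j} = Iio j := fun j hj => by
    rw [Iio_filter_lt, min_eq_right (mem_Iio.1 hj).le]
  have hmain := abs_prod_sub_prod_le_sum (Iio i) _ _ habs_one_sub_μ' hone_sub_μ_nonneg
  rw [sum_congr rfl fun j hj => by rw [hprefix j hj, sub_sub_sub_cancel_left]] at hmain
  refine ⟨hmain, hmain.trans ?_⟩
  exact sum_le_sum_of_subset_of_nonneg (subset_univ _) fun j _ _ =>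
    mul_nonneg (prod_nonneg fun l _ => hone_sub_μ_nonneg l) (abs_nonneg _)
end

section
/- For any μ, μ' in (0,1)^K and any decomposition μ' = μ + ζ + η with ζ, η in [-1,1]^K, if a reward function r satisfies the TPM 1-norm smoothness condition with coefficient B_1 (i.e., |r(μ') - r(μ)| <= B_1 sum_{i} p_i(μ) |μ_i - μ'_i| with p_i(μ) in [0,1] supported on a set of size at most K), then r satisfies the variance-modulated smoothness condition with coefficients (B_v, B_1) = (B_1 sqrt(K)/2, B_1): |r(μ') - r(μ)| <= (B_1 sqrt(K)/2) · sqrt( sum_i ζ_i^2 / (μ_i (1-μ_i)) ) + B_1 sum_i |η_i|. -/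
/-!
Split `|μᵢ - μ'ᵢ| ≤ |ζᵢ| + |ηᵢ|` in the 1-norm bound; the `η`-part is at most `∑ |ηᵢ|` since
`pᵢ ≤ 1`. For the `ζ`-part, Cauchy–Schwarz with the factorisation
`pᵢ |ζᵢ| = (pᵢ √vᵢ) · (|ζᵢ| / √vᵢ)`, where `vᵢ = μᵢ (1 - μᵢ)`, gives
`∑ pᵢ |ζᵢ| ≤ √(∑ pᵢ² vᵢ) · √(∑ ζᵢ² / vᵢ)`, and `pᵢ² vᵢ ≤ 1/4` on the at most `K` indices
with `pᵢ ≠ 0`.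
-/

open Finset

variable {ι : Type*}

lemma mul_one_sub_le_quarter (x : ℝ) : x * (1 - x) ≤ 1 / 4 := by
  nlinarith [sq_nonneg (x - 1 / 2)]

lemma Finset.sum_abs_mul_le_sqrt_mul_sqrt_of_pos (s : Finset ι) (p ζ : ι → ℝ) {v : ι → ℝ}
    (hv : ∀ i, 0 < v i) :
    ∑ i ∈ s, |p i * ζ i| ≤ √(∑ i ∈ s, p i ^ 2 * v i) * √(∑ i ∈ s, ζ i ^ 2 / v i) := by
  have hsqrt (i : ι) : √(p i ^ 2 * v i) * √(ζ i ^ 2 / v i) = |p i * ζ i| := by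
    rw [← Real.sqrt_mul (by have := hv i; positivity), ← Real.sqrt_sq_eq_abs]
    congr 1
    field_simp [(hv i).ne']
  calc ∑ i ∈ s, |p i * ζ i| = ∑ i ∈ s, √(p i ^ 2 * v i) * √(ζ i ^ 2 / v i) :=
        sum_congr rfl fun i _ => (hsqrt i).symm
    _ ≤ _ := Real.sum_sqrt_mul_sqrt_le s (fun i => by have := hv i; positivity)
        (fun i => by have := hv i; positivity)

lemma Finset.sum_sq_mul_variance_le [Fintype ι] (p μ : ι → ℝ) (hp : ∀ i, |p i| ≤ 1) :
    ∑ i, p i ^ 2 * (μ i * (1 - μ i)) ≤ (#{i | p i ≠ 0} : ℝ) / 4 := by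
  calc ∑ i, p i ^ 2 * (μ i * (1 - μ i))
      = ∑ i with p i ≠ 0, p i ^ 2 * (μ i * (1 - μ i)) := by
        rw [sum_filter_of_ne]
        intro i _ h hp0
        simp [hp0] at h
    _ ≤ ∑ i with p i ≠ 0, (1 / 4 : ℝ) := by
        gcongr with i
        have hp2 : p i ^ 2 ≤ 1 := (sq_le_one_iff_abs_le_one _).mpr (hp i)
        nlinarith [sq_nonneg (p i), mul_one_sub_le_quarter (μ i)]
    _ = (#{i | p i ≠ 0} : ℝ) / 4 := by simp [div_eq_mul_inv]

lemma Finset.sum_abs_mul_le_sqrt_card_support_mul_sqrt [Fintype ι] (p μ ζ : ι → ℝ)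
    (hp : ∀ i, |p i| ≤ 1) (hμ : ∀ i, μ i ∈ Set.Ioo (0 : ℝ) 1) :
    ∑ i, |p i * ζ i| ≤ √(#{i | p i ≠ 0} : ℝ) / 2 * √(∑ i, ζ i ^ 2 / (μ i * (1 - μ i))) := by
  have hv (i : ι) : 0 < μ i * (1 - μ i) := mul_pos (hμ i).1 (sub_pos.mpr (hμ i).2)
  calc ∑ i, |p i * ζ i|
      ≤ √(∑ i, p i ^ 2 * (μ i * (1 - μ i))) * √(∑ i, ζ i ^ 2 / (μ i * (1 - μ i))) :=
        sum_abs_mul_le_sqrt_mul_sqrt_of_pos _ p ζ hv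
    _ ≤ √((#{i | p i ≠ 0} : ℝ) / 4) * √(∑ i, ζ i ^ 2 / (μ i * (1 - μ i))) := by
        gcongr
        exact sum_sq_mul_variance_le p μ hp
    _ = √(#{i | p i ≠ 0} : ℝ) / 2 * √(∑ i, ζ i ^ 2 / (μ i * (1 - μ i))) := by
        rw [Real.sqrt_div' _ (by norm_num : (0 : ℝ) ≤ 4), show (4 : ℝ) = 2 ^ 2 by norm_num,
          Real.sqrt_sq zero_le_two]

theorem stmt_7_general (m K : ℕ) (μ μ' ζ η p : Fin m → ℝ) (r : (Fin m → ℝ) → ℝ) (B1 : ℝ)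
    (hB1 : 0 ≤ B1)
    (hμ : ∀ i, μ i ∈ Set.Ioo (0:ℝ) 1)
    (hdec : ∀ i, μ' i = μ i + ζ i + η i)
    (hp : ∀ i, p i ∈ Set.Icc (0:ℝ) 1)
    (hsupp : (Finset.univ.filter fun i => p i ≠ 0).card ≤ K)
    (hTPM : |r μ' - r μ| ≤ B1 * ∑ i, p i * |μ i - μ' i|) :
    |r μ' - r μ| ≤
      B1 * Real.sqrt K / 2 * Real.sqrt (∑ i, (ζ i) ^ 2 / (μ i * (1 - μ i))) +
        B1 * ∑ i, |η i| := by
  have hsplit : ∑ i, p i * |μ i - μ' i| ≤ ∑ i, |p i * ζ i| + ∑ i, |η i| := by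
    rw [← sum_add_distrib]
    gcongr with i
    obtain ⟨hp0, hp1⟩ := hp i
    have hdiff : |μ i - μ' i| = |ζ i + η i| := by rw [hdec i, ← abs_neg]; ring_nf
    rw [hdiff, abs_mul, abs_of_nonneg hp0]
    nlinarith [abs_add_le (ζ i) (η i), abs_nonneg (η i)]
  have hζpart := sum_abs_mul_le_sqrt_card_support_mul_sqrt p μ ζ
    (fun i => abs_le.mpr ⟨by linarith [(hp i).1], (hp i).2⟩) hμ
  have hcard : √(#{i | p i ≠ 0} : ℝ) ≤ √K := Real.sqrt_le_sqrt (by exact_mod_cast hsupp)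
  calc |r μ' - r μ| ≤ B1 * ∑ i, p i * |μ i - μ' i| := hTPM
    _ ≤ B1 * (√K / 2 * √(∑ i, ζ i ^ 2 / (μ i * (1 - μ i))) + ∑ i, |η i|) := by
        gcongr
        refine hsplit.trans (add_le_add_left (hζpart.trans ?_) _)
        gcongr
    _ = _ := by ring

theorem stmt_7 (m K : ℕ) (μ μ' ζ η p : Fin m → ℝ) (r : (Fin m → ℝ) → ℝ) (B1 : ℝ)
    (hB1 : 0 ≤ B1)
    (hμ : ∀ i, μ i ∈ Set.Ioo (0:ℝ) 1) (hμ' : ∀ i, μ' i ∈ Set.Ioo (0:ℝ) 1)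
    (hζ : ∀ i, ζ i ∈ Set.Icc (-1:ℝ) 1) (hη : ∀ i, η i ∈ Set.Icc (-1:ℝ) 1)
    (hdec : ∀ i, μ' i = μ i + ζ i + η i)
    (hp : ∀ i, p i ∈ Set.Icc (0:ℝ) 1)
    (hsupp : (Finset.univ.filter fun i => p i ≠ 0).card ≤ K)
    (hTPM : |r μ' - r μ| ≤ B1 * ∑ i, p i * |μ i - μ' i|) :
    |r μ' - r μ| ≤
      B1 * Real.sqrt K / 2 * Real.sqrt (∑ i, (ζ i) ^ 2 / (μ i * (1 - μ i))) +
        B1 * ∑ i, |η i| :=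
  stmt_7_general m K μ μ' ζ η p r B1 hB1 hμ hdec hp hsupp hTPM
end

section
/- Let γ > 0, G_1 = γ I, and for t = 1, ..., T let G_{t+1} = G_t + sum_{i in τ_t} φ_t(i) φ_t(i)^T, where each τ_t is a finite index set of size at most K and ||φ_t(i)||_2 <= 1 for all t, i. If γ >= K, then sum_{t=1}^T sum_{i in τ_t} ||φ_t(i)||^2_{G_t^{-1}} <= 2 d log(1 + K T/(γ d)). -/
/-!
With `S_t = ∑_{i ∈ τ_t} φ_t(i) φ_t(i)ᵀ` and `x_t = ∑_{i ∈ τ_t} ‖φ_t(i)‖²_{G_t⁻¹} = tr (G_t⁻¹ S_t)`,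
each update multiplies the determinant by at least `1 + x_t`: diagonalise
`G_t^{-1/2} S_t G_t^{-1/2}` and use `∏ (1 + λ) ≥ 1 + ∑ λ`. Telescoping, and AM-GM on the
eigenvalues of `G_{T+1}`, give
`∏_t (1 + x_t) ≤ det G_{T+1} / γ^d ≤ (tr G_{T+1} / (γ d))^d ≤ (1 + K T / (γ d))^d`.
Since `G_t ≥ γ I`, each `x_t ≤ K / γ ≤ 1`, so `x_t ≤ 2 log (1 + x_t)`; summing and taking
logarithms gives the bound.
-/

open Matrix

theorem Finset.one_add_sum_le_prod_one_add {ι R : Type*} [CommSemiring R] [PartialOrder R]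
    [IsOrderedRing R] (s : Finset ι) {f : ι → R} (hf : ∀ i ∈ s, 0 ≤ f i) :
    1 + ∑ i ∈ s, f i ≤ ∏ i ∈ s, (1 + f i) := by
  classical
  induction s using Finset.induction_on with
  | empty => simp
  | insert a s ha ih =>
    rw [Finset.sum_insert ha, Finset.prod_insert ha]
    have hfa := hf a (mem_insert_self a s)
    have hsum : 0 ≤ ∑ i ∈ s, f i := Finset.sum_nonneg fun i hi => hf i (mem_insert_of_mem hi)
    calc 1 + (f a + ∑ i ∈ s, f i) ≤ 1 + (f a + ∑ i ∈ s, f i) + f a * ∑ i ∈ s, f i :=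
          le_add_of_nonneg_right (mul_nonneg hfa hsum)
      _ = (1 + f a) * (1 + ∑ i ∈ s, f i) := by ring
      _ ≤ (1 + f a) * ∏ i ∈ s, (1 + f i) :=
          mul_le_mul_of_nonneg_left (ih fun i hi => hf i (mem_insert_of_mem hi))
            (add_nonneg zero_le_one hfa)

theorem Real.prod_le_sum_div_card_pow {ι : Type*} [Fintype ι] {z : ι → ℝ} (hz : ∀ i, 0 ≤ z i) :
    ∏ i, z i ≤ ((∑ i, z i) / Fintype.card ι) ^ Fintype.card ι := by
  rcases isEmpty_or_nonempty ι with hι | hι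
  · simp
  have hn : (Fintype.card ι : ℝ) ≠ 0 := by positivity
  have hamgm : ∏ i, z i ^ (Fintype.card ι : ℝ)⁻¹ ≤ ∑ i, (Fintype.card ι : ℝ)⁻¹ * z i :=
    Real.geom_mean_le_arith_mean_weighted _ _ _ (fun _ _ => by positivity)
      (by simp [Finset.card_univ, hn]) fun i _ => hz i
  calc ∏ i, z i = (∏ i, z i ^ (Fintype.card ι : ℝ)⁻¹) ^ Fintype.card ι := by
        rw [← Finset.prod_pow]
        refine Finset.prod_congr rfl fun i _ => ?_
        rw [← Real.rpow_mul_natCast (hz i), inv_mul_cancel₀ hn, Real.rpow_one]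
    _ ≤ (∑ i, (Fintype.card ι : ℝ)⁻¹ * z i) ^ Fintype.card ι := by
        gcongr
        exact Finset.prod_nonneg fun i _ => by have := hz i; positivity
    _ = ((∑ i, z i) / Fintype.card ι) ^ Fintype.card ι := by
        rw [← Finset.mul_sum, inv_mul_eq_div]

theorem Real.sum_le_two_mul_log_prod_one_add {ι : Type*} (s : Finset ι) {x : ι → ℝ}
    (h0 : ∀ i ∈ s, 0 ≤ x i) (h2 : ∀ i ∈ s, x i ≤ 2) :
    ∑ i ∈ s, x i ≤ 2 * Real.log (∏ i ∈ s, (1 + x i)) := by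
  rw [Real.log_prod fun i hi => by linarith [h0 i hi], Finset.mul_sum]
  refine Finset.sum_le_sum fun i hi => ?_
  have hlog := Real.le_log_one_add_of_nonneg (h0 i hi)
  have : x i ≤ 2 * (2 * x i / (x i + 2)) := by
    rw [mul_div_assoc', le_div_iff₀ (by linarith [h0 i hi])]; nlinarith [h0 i hi, h2 i hi]
  linarith

theorem Fin.apply_zero_mul_prod_le_apply_last {R : Type*} [CommSemiring R] [PartialOrder R]
    [IsOrderedRing R] : ∀ {n : ℕ} {f : Fin (n + 1) → R} {a : Fin n → R}, (∀ t, 0 ≤ a t) →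
    (∀ t, f t.castSucc * a t ≤ f t.succ) → f 0 * ∏ t, a t ≤ f (Fin.last n)
  | 0, f, a, _, _ => by simp
  | n + 1, f, a, ha, hf => by
    rw [Fin.prod_univ_castSucc, ← mul_assoc]
    calc f 0 * (∏ t : Fin n, a t.castSucc) * a (Fin.last n)
        ≤ f (Fin.last n).castSucc * a (Fin.last n) := by
          gcongr
          · exact ha _
          · exact Fin.apply_zero_mul_prod_le_apply_last (f := fun t => f t.castSucc)
              (fun t => ha _) fun t => hf t.castSucc
      _ ≤ f (Fin.last (n + 1)) := hf (Fin.last n)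

theorem Fin.apply_le_apply_zero_add_mul {R : Type*} [Semiring R] [PartialOrder R]
    [IsOrderedRing R] {n : ℕ} {f : Fin (n + 1) → R} {c : R}
    (hf : ∀ t : Fin n, f t.succ ≤ f t.castSucc + c) (s : Fin (n + 1)) : f s ≤ f 0 + c * s := by
  induction s using Fin.induction with
  | zero => simp
  | succ t ih =>
    calc f t.succ ≤ f t.castSucc + c := hf t
      _ ≤ f 0 + c * t + c := by gcongr; simpa using ih
      _ = f 0 + c * (t.succ : ℕ) := by simp [mul_add, add_assoc]

open scoped MatrixOrder

namespace Matrix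

variable {n : Type*} [Fintype n] [DecidableEq n]

theorem PosSemidef.one_add_trace_le_det_one_add {H : Matrix n n ℝ} (hH : H.PosSemidef) :
    1 + H.trace ≤ (1 + H).det := by
  have hdet : (1 + H).det = ∏ i, (1 + hH.isHermitian.eigenvalues i) := by
    conv_lhs => rw [hH.isHermitian.spectral_theorem]
    rw [Unitary.conjStarAlgAut_apply, det_one_add_mul_comm,
      ← Matrix.mul_assoc, Unitary.coe_star_mul_self, Matrix.one_mul, ← diagonal_one,
      diagonal_add, det_diagonal]
    simp
  rw [hdet, hH.isHermitian.trace_eq_sum_eigenvalues]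
  simpa using Finset.one_add_sum_le_prod_one_add _ fun i _ => hH.eigenvalues_nonneg i

theorem PosSemidef.det_le_trace_div_card_pow {H : Matrix n n ℝ} (hH : H.PosSemidef) :
    H.det ≤ (H.trace / Fintype.card n) ^ Fintype.card n := by
  rw [hH.isHermitian.det_eq_prod_eigenvalues, hH.isHermitian.trace_eq_sum_eigenvalues]
  simpa using Real.prod_le_sum_div_card_pow hH.eigenvalues_nonneg

theorem PosSemidef.trace_mul_nonneg {A B : Matrix n n ℝ} (hA : A.PosSemidef)
    (hB : B.PosSemidef) : 0 ≤ (A * B).trace := by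
  set R := CFC.sqrt A
  have hRR : R * R = A := CFC.sqrt_mul_sqrt_self _ (nonneg_iff_posSemidef.2 hA)
  have hR : Rᴴ = R := (nonneg_iff_posSemidef.mp (CFC.sqrt_nonneg _)).isHermitian
  have := (hB.mul_mul_conjTranspose_same R).trace_nonneg
  rwa [hR, trace_mul_cycle, hRR] at this

theorem PosDef.det_mul_one_add_trace_le_det_add {G S : Matrix n n ℝ} (hG : G.PosDef)
    (hS : S.PosSemidef) : G.det * (1 + (G⁻¹ * S).trace) ≤ (G + S).det := by
  set R := CFC.sqrt G⁻¹
  have hRR : R * R = G⁻¹ := CFC.sqrt_mul_sqrt_self _ hG.inv.posSemidef.nonneg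
  have hR : Rᴴ = R := (nonneg_iff_posSemidef.mp (CFC.sqrt_nonneg _)).isHermitian
  have hRSR : (R * S * R).PosSemidef := by
    have := hS.mul_mul_conjTranspose_same R
    rwa [hR] at this
  -- `R = G^{-1/2}`; Weinstein–Aronszajn turns `det (1 + R (R S))` into `det (1 + R S R)`.
  have hfactor : G + S = G * (1 + R * (R * S)) := by
    rw [← Matrix.mul_assoc, hRR, Matrix.mul_add, Matrix.mul_one, ← Matrix.mul_assoc,
      mul_nonsing_inv _ hG.det_pos.ne'.isUnit, Matrix.one_mul]
  calc G.det * (1 + (G⁻¹ * S).trace) = G.det * (1 + (R * S * R).trace) := by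
        rw [trace_mul_cycle, hRR]
    _ ≤ G.det * (1 + R * S * R).det := by
        gcongr
        · exact hG.det_pos.le
        · exact hRSR.one_add_trace_le_det_one_add
    _ = (G + S).det := by
        rw [hfactor, det_mul, det_one_add_mul_comm]

omit [Fintype n] in
theorem posDef_of_smul_one_le {γ : ℝ} (hγ : 0 < γ) {G : Matrix n n ℝ} (hG : γ • 1 ≤ G) :
    G.PosDef := by
  simpa using (PosDef.one.smul hγ).add_posSemidef (le_iff.mp hG)

theorem dotProduct_inv_mulVec_le_of_smul_one_le {γ : ℝ} (hγ : 0 < γ) {G : Matrix n n ℝ}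
    (hG : γ • 1 ≤ G) (v : n → ℝ) : v ⬝ᵥ G⁻¹ *ᵥ v ≤ (v ⬝ᵥ v) / γ := by
  set w := G⁻¹ *ᵥ v
  have hGw : G *ᵥ w = v := by
    rw [mulVec_mulVec, mul_nonsing_inv _ (posDef_of_smul_one_le hγ hG).det_pos.ne'.isUnit,
      one_mulVec]
  -- `γ |w|² ≤ w ⬝ G w = v ⬝ w`, and `0 ≤ |v - γ w|²` then gives `γ (v ⬝ w) ≤ |v|²`
  have hquad : γ * (w ⬝ᵥ w) ≤ v ⬝ᵥ w := by
    have := (le_iff.mp hG).dotProduct_mulVec_nonneg w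
    simp only [star_trivial, sub_mulVec, dotProduct_sub, smul_mulVec, one_mulVec,
      dotProduct_smul, smul_eq_mul, hGw, dotProduct_comm w v] at this
    linarith
  have hsq : 0 ≤ (v - γ • w) ⬝ᵥ (v - γ • w) := by
    simpa using (dotProduct_star_self_nonneg (v - γ • w))
  simp only [sub_dotProduct, dotProduct_sub, smul_dotProduct, dotProduct_smul, smul_eq_mul,
    dotProduct_comm w v] at hsq
  rw [le_div_iff₀ hγ]
  nlinarith

omit [DecidableEq n] in
theorem posSemidef_sum_vecMulVec_self {ι : Type*} (s : Finset ι) (v : ι → n → ℝ) :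
    (∑ i ∈ s, vecMulVec (v i) (v i)).PosSemidef :=
  posSemidef_sum s fun i _ => by simpa using posSemidef_vecMulVec_self_star (v i)

omit [DecidableEq n] in
theorem trace_sum_vecMulVec_self_le_card {ι : Type*} {s : Finset ι} {v : ι → n → ℝ}
    (hv : ∀ i ∈ s, v i ⬝ᵥ v i ≤ 1) : (∑ i ∈ s, vecMulVec (v i) (v i)).trace ≤ s.card := by
  rw [trace_sum]
  simpa using Finset.sum_le_sum fun i hi => (trace_vecMulVec (v i) (v i)).trans_le (hv i hi)

theorem sum_dotProduct_inv_mulVec_le_card_div {ι : Type*} {γ : ℝ} (hγ : 0 < γ)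
    {G : Matrix n n ℝ} (hG : γ • 1 ≤ G) {s : Finset ι} {v : ι → n → ℝ}
    (hv : ∀ i ∈ s, v i ⬝ᵥ v i ≤ 1) : ∑ i ∈ s, v i ⬝ᵥ G⁻¹ *ᵥ v i ≤ s.card / γ := by
  calc ∑ i ∈ s, v i ⬝ᵥ G⁻¹ *ᵥ v i ≤ ∑ _i ∈ s, 1 / γ :=
        Finset.sum_le_sum fun i hi => (dotProduct_inv_mulVec_le_of_smul_one_le hγ hG (v i)).trans
          (by gcongr; exact hv i hi)
    _ = s.card / γ := by simp [div_eq_mul_inv]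

omit [Fintype n] [DecidableEq n] in
theorem monotone_of_succ_eq_add_posSemidef {T : ℕ} {G : Fin (T + 1) → Matrix n n ℝ}
    {S : Fin T → Matrix n n ℝ} (hS : ∀ t, (S t).PosSemidef)
    (hrec : ∀ t, G t.succ = G t.castSucc + S t) : Monotone G :=
  Fin.monotone_iff_le_succ.2 fun t => by
    rw [hrec]; exact le_add_of_nonneg_right (nonneg_iff_posSemidef.2 (hS t))

theorem PosDef.det_mul_prod_one_add_trace_le {T : ℕ} {G : Fin (T + 1) → Matrix n n ℝ}
    {S : Fin T → Matrix n n ℝ} (hG0 : (G 0).PosDef) (hS : ∀ t, (S t).PosSemidef)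
    (hrec : ∀ t, G t.succ = G t.castSucc + S t) :
    (G 0).det * ∏ t, (1 + ((G t.castSucc)⁻¹ * S t).trace) ≤ (G (Fin.last T)).det := by
  have hG : ∀ s, (G s).PosDef := fun s => by
    simpa using hG0.add_posSemidef
      (le_iff.mp (monotone_of_succ_eq_add_posSemidef hS hrec (Fin.zero_le s)))
  refine Fin.apply_zero_mul_prod_le_apply_last (f := fun s => (G s).det) (fun t => ?_) fun t => ?_
  · exact add_nonneg zero_le_one ((hG t.castSucc).inv.posSemidef.trace_mul_nonneg (hS t))
  · rw [hrec]; exact (hG t.castSucc).det_mul_one_add_trace_le_det_add (hS t)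

theorem prod_one_add_trace_inv_mul_le {T : ℕ} {γ c : ℝ} (hγ : 0 < γ)
    {G : Fin (T + 1) → Matrix n n ℝ} {S : Fin T → Matrix n n ℝ} (hG0 : G 0 = γ • 1)
    (hS : ∀ t, (S t).PosSemidef) (hrec : ∀ t, G t.succ = G t.castSucc + S t)
    (hc : (G (Fin.last T)).trace ≤ c) :
    ∏ t, (1 + ((G t.castSucc)⁻¹ * S t).trace) ≤ (c / (γ * Fintype.card n)) ^ Fintype.card n := by
  have h := PosDef.det_mul_prod_one_add_trace_le (hG0 ▸ PosDef.one.smul hγ) hS hrec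
  have hlast : (G (Fin.last T)).PosSemidef := (posDef_of_smul_one_le hγ
    (hG0 ▸ monotone_of_succ_eq_add_posSemidef hS hrec (Fin.zero_le _))).posSemidef
  rw [hG0, det_smul, det_one, mul_one] at h
  refine le_of_mul_le_mul_left (h.trans ?_) (pow_pos hγ _)
  calc (G (Fin.last T)).det
      ≤ ((G (Fin.last T)).trace / Fintype.card n) ^ Fintype.card n :=
        hlast.det_le_trace_div_card_pow
    _ ≤ (c / Fintype.card n) ^ Fintype.card n := by
        gcongr
        exact div_nonneg hlast.trace_nonneg (Nat.cast_nonneg _)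
    _ = γ ^ Fintype.card n * (c / (γ * Fintype.card n)) ^ Fintype.card n := by
        rw [← mul_pow, ← mul_div_assoc, mul_div_mul_left _ _ hγ.ne']

end Matrix

open Matrix in
theorem stmt_9 (d K T : ℕ) (γ : ℝ) (hγ : 0 < γ) (hγK : (K : ℝ) ≤ γ)
    (τ : Fin T → Finset ℕ) (φ : Fin T → ℕ → Fin d → ℝ)
    (hτ : ∀ t, (τ t).card ≤ K)
    (hφ : ∀ t, ∀ i ∈ τ t, ∑ j, (φ t i j) ^ 2 ≤ 1)
    (G : Fin (T + 1) → Matrix (Fin d) (Fin d) ℝ)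
    (hG0 : G 0 = γ • (1 : Matrix (Fin d) (Fin d) ℝ))
    (hrec : ∀ t : Fin T,
      G t.succ = G t.castSucc + ∑ i ∈ τ t, Matrix.vecMulVec (φ t i) (φ t i)) :
    ∑ t : Fin T, ∑ i ∈ τ t, φ t i ⬝ᵥ (G t.castSucc)⁻¹.mulVec (φ t i) ≤
      2 * d * Real.log (1 + K * T / (γ * d)) := by
  rcases Nat.eq_zero_or_pos d with rfl | hd
  · simp
  set S := fun t => ∑ i ∈ τ t, vecMulVec (φ t i) (φ t i)
  set x := fun t : Fin T => ∑ i ∈ τ t, φ t i ⬝ᵥ (G t.castSucc)⁻¹ *ᵥ φ t i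
  have hS : ∀ t, (S t).PosSemidef := fun t => posSemidef_sum_vecMulVec_self _ _
  have hφφ : ∀ t, ∀ i ∈ τ t, φ t i ⬝ᵥ φ t i ≤ 1 := fun t i hi => by
    simpa [dotProduct, sq] using hφ t i hi
  have hγG : ∀ s, γ • 1 ≤ G s := fun s =>
    hG0 ▸ monotone_of_succ_eq_add_posSemidef hS hrec (Fin.zero_le s)
  have hx : ∀ t, x t = ((G t.castSucc)⁻¹ * S t).trace := fun t => by
    simp [x, S, Matrix.mul_sum, trace_sum, mul_vecMulVec, dotProduct_comm]
  have hx0 : ∀ t, 0 ≤ x t := fun t => by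
    rw [hx]; exact (posDef_of_smul_one_le hγ (hγG _)).inv.posSemidef.trace_mul_nonneg (hS t)
  have hx1 : ∀ t, x t ≤ 1 := fun t =>
    (sum_dotProduct_inv_mulVec_le_card_div hγ (hγG _) (hφφ t)).trans <| by
      rw [div_le_one hγ]; exact (Nat.cast_le.2 (hτ t)).trans hγK
  have htrace : (G (Fin.last T)).trace ≤ γ * d + K * T := by
    simpa [hG0] using Fin.apply_le_apply_zero_add_mul (f := fun s => (G s).trace) (c := K)
      (fun t => by
        rw [hrec, trace_add]
        gcongr
        exact (trace_sum_vecMulVec_self_le_card (hφφ t)).trans (Nat.cast_le.2 (hτ t)))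
      (Fin.last T)
  have hprod : ∏ t, (1 + x t) ≤ (1 + K * T / (γ * d)) ^ d := by
    simpa [← hx, add_div, mul_div_mul_left, hγ.ne', hd.ne'] using
      prod_one_add_trace_inv_mul_le hγ hG0 hS hrec htrace
  calc ∑ t, x t ≤ 2 * Real.log (∏ t, (1 + x t)) :=
        Real.sum_le_two_mul_log_prod_one_add _ (fun t _ => hx0 t)
          fun t _ => (hx1 t).trans one_le_two
    _ ≤ 2 * Real.log ((1 + K * T / (γ * d)) ^ d) := by
        gcongr
        exact Finset.prod_pos fun t _ => by linarith [hx0 t]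
    _ = 2 * d * Real.log (1 + K * T / (γ * d)) := by rw [Real.log_pow]; ring
end

section
/- Let G = γ I + sum_{s=1}^{t-1} x_s x_s^T with γ > 0 and ||x_s||_2^2 <= L for all s. Then det(G) <= (γ + (t-1) L / d)^d. -/
/-!
For a positive semidefinite matrix the determinant and the trace are the product and the sum
of its (nonnegative) eigenvalues, so AM–GM gives `det A ≤ (trace A / d) ^ d`. For
`G = γ I + ∑ s, x s (x s)ᵀ` the trace is `γ d + ∑ s, ‖x s‖² ≤ γ d + n L`.
-/

open Finset Matrix

theorem Real.prod_le_pow_sum_div_card {ι : Type*} (s : Finset ι) (z : ι → ℝ)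
    (hz : ∀ i ∈ s, 0 ≤ z i) : ∏ i ∈ s, z i ≤ ((∑ i ∈ s, z i) / #s) ^ #s := by
  rcases s.eq_empty_or_nonempty with rfl | hs
  · simp
  have hcard : (0 : ℝ) < #s := by exact_mod_cast hs.card_pos
  have hprod : 0 ≤ ∏ i ∈ s, z i := prod_nonneg hz
  have amgm := Real.geom_mean_le_arith_mean s (fun _ ↦ 1) z (fun _ _ ↦ zero_le_one)
    (by simpa using hcard) hz
  simp only [Real.rpow_one, one_mul, sum_const, nsmul_eq_mul, mul_one] at amgm
  calc ∏ i ∈ s, z i = ((∏ i ∈ s, z i) ^ (#s : ℝ)⁻¹) ^ #s := by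
        rw [← Real.rpow_natCast, ← Real.rpow_mul hprod, inv_mul_cancel₀ hcard.ne', Real.rpow_one]
    _ ≤ ((∑ i ∈ s, z i) / #s) ^ #s := by gcongr

theorem Matrix.PosSemidef.det_le_trace_div_card_pow_s10 {n : Type*} [Fintype n] [DecidableEq n]
    {A : Matrix n n ℝ} (hA : A.PosSemidef) :
    A.det ≤ (A.trace / Fintype.card n) ^ Fintype.card n := by
  rw [hA.isHermitian.det_eq_prod_eigenvalues, hA.isHermitian.trace_eq_sum_eigenvalues]
  simpa using Real.prod_le_pow_sum_div_card univ _ fun i _ ↦ hA.eigenvalues_nonneg i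

theorem Matrix.posSemidef_smul_one_add_sum_vecMulVec {d ι : Type*} [Fintype d] [DecidableEq d]
    (s : Finset ι) {γ : ℝ} (hγ : 0 ≤ γ) (x : ι → d → ℝ) :
    (γ • (1 : Matrix d d ℝ) + ∑ i ∈ s, vecMulVec (x i) (x i)).PosSemidef :=
  (PosSemidef.one.smul hγ).add <|
    posSemidef_sum s fun i _ ↦ by simpa using posSemidef_vecMulVec_self_star (x i)

theorem Matrix.trace_smul_one_add_sum_vecMulVec {d ι : Type*} [Fintype d] [DecidableEq d]
    (s : Finset ι) (γ : ℝ) (x : ι → d → ℝ) :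
    (γ • (1 : Matrix d d ℝ) + ∑ i ∈ s, vecMulVec (x i) (x i)).trace =
      γ * Fintype.card d + ∑ i ∈ s, ∑ j, x i j ^ 2 := by
  simp [trace_sum, trace_vecMulVec, dotProduct, sq]

theorem stmt_10 (d n : ℕ) (γ L : ℝ) (hγ : 0 < γ) (x : Fin n → Fin d → ℝ)
    (hx : ∀ s, ∑ j, (x s j) ^ 2 ≤ L) :
    (γ • (1 : Matrix (Fin d) (Fin d) ℝ) + ∑ s, Matrix.vecMulVec (x s) (x s)).det ≤
      (γ + n * L / d) ^ d := by
  rcases d.eq_zero_or_pos with rfl | hd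
  · simp
  set G := γ • (1 : Matrix (Fin d) (Fin d) ℝ) + ∑ s, vecMulVec (x s) (x s)
  have hG : G.PosSemidef := posSemidef_smul_one_add_sum_vecMulVec univ hγ.le x
  have htrace : G.trace ≤ γ * d + n * L := by
    have hsum : ∑ s, ∑ j, x s j ^ 2 ≤ n * L := by
      simpa using sum_le_card_nsmul univ _ L fun s _ ↦ hx s
    rw [trace_smul_one_add_sum_vecMulVec, Fintype.card_fin]
    linarith
  have hdpos : (0 : ℝ) < d := by exact_mod_cast hd
  calc G.det ≤ (G.trace / d) ^ d := by simpa using hG.det_le_trace_div_card_pow_s10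
    _ ≤ (γ + n * L / d) ^ d := by
      gcongr
      · exact div_nonneg hG.trace_nonneg hdpos.le
      · rw [div_le_iff₀ hdpos, add_mul, div_mul_cancel₀ _ hdpos.ne']
        linarith
end

section
/- Suppose for every t in [T] and arm i the inequality μ_{t,i} <= ū_{t,i} <= μ_{t,i} + c_{t,i} holds with c_{t,i} >= 0, the reward r(S; ·) is monotone nondecreasing in each coordinate and satisfies |r(S;μ') - r(S;μ)| <= B_1 sum_i p_i(μ,S)|μ_i - μ'_i| with p_i(μ,S) in [0,1]. If S_t maximizes r(S; ū_t) up to an α factor (r(S_t; ū_t) >= α max_S r(S; ū_t)), then α r(S_t^*; μ_t) - r(S_t; μ_t) <= B_1 sum_i p_i(μ_t, S_t) c_{t,i}, where S_t^* maximizes r(·; μ_t). -/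
open Finset

lemma sum_mul_abs_sub_le_sum_mul {ι : Type*} (s : Finset ι) {w ν ν' c : ι → ℝ}
    (hw : ∀ i ∈ s, 0 ≤ w i) (hle : ∀ i ∈ s, ν i ≤ ν' i) (hbound : ∀ i ∈ s, ν' i ≤ ν i + c i) :
    ∑ i ∈ s, w i * |ν i - ν' i| ≤ ∑ i ∈ s, w i * c i := by
  refine sum_le_sum fun i hi => mul_le_mul_of_nonneg_left ?_ (hw i hi)
  rw [abs_sub_comm, abs_of_nonneg (sub_nonneg.2 (hle i hi))]
  linarith [hbound i hi]

lemma mul_le_of_approx_optimal_of_monotone {𝒮 ι : Type*} {r : 𝒮 → (ι → ℝ) → ℝ} {α : ℝ}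
    (hα : 0 ≤ α) (hmono : ∀ S (ν ν' : ι → ℝ), (∀ i, ν i ≤ ν' i) → r S ν ≤ r S ν')
    {ν ν' : ι → ℝ} (hle : ∀ i, ν i ≤ ν' i) {St : 𝒮} (hSt : ∀ S, α * r S ν' ≤ r St ν') (S : 𝒮) :
    α * r S ν ≤ r St ν' :=
  (mul_le_mul_of_nonneg_left (hmono S ν ν' hle) hα).trans (hSt S)

theorem stmt_11_general {𝒮 : Type*} (m : ℕ) (r : 𝒮 → (Fin m → ℝ) → ℝ)
    (p : (Fin m → ℝ) → 𝒮 → Fin m → ℝ) (B1 α : ℝ) (hB1 : 0 ≤ B1) (hα : 0 ≤ α)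
    (hmono : ∀ S (ν ν' : Fin m → ℝ), (∀ i, ν i ≤ ν' i) → r S ν ≤ r S ν')
    (hsmooth : ∀ S (ν ν' : Fin m → ℝ),
      |r S ν' - r S ν| ≤ B1 * ∑ i, p ν S i * |ν i - ν' i|)
    (hp : ∀ ν S i, p ν S i ∈ Set.Icc (0:ℝ) 1)
    (μ ubar c : Fin m → ℝ)
    (hub : ∀ i, μ i ≤ ubar i ∧ ubar i ≤ μ i + c i)
    (St Sstar : 𝒮)
    (hSt : ∀ S, α * r S ubar ≤ r St ubar) :
    α * r Sstar μ - r St μ ≤ B1 * ∑ i, p μ St i * c i := by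
  have hoptimism : α * r Sstar μ ≤ r St ubar :=
    mul_le_of_approx_optimal_of_monotone hα hmono (fun i => (hub i).1) hSt Sstar
  have hwidth : ∑ i, p μ St i * |μ i - ubar i| ≤ ∑ i, p μ St i * c i :=
    sum_mul_abs_sub_le_sum_mul _ (fun i _ => (hp μ St i).1) (fun i _ => (hub i).1)
      (fun i _ => (hub i).2)
  calc α * r Sstar μ - r St μ ≤ r St ubar - r St μ := by linarith
    _ ≤ B1 * ∑ i, p μ St i * |μ i - ubar i| := (le_abs_self _).trans (hsmooth St μ ubar)
    _ ≤ B1 * ∑ i, p μ St i * c i := mul_le_mul_of_nonneg_left hwidth hB1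

theorem stmt_11 {𝒮 : Type*} (m : ℕ) (r : 𝒮 → (Fin m → ℝ) → ℝ)
    (p : (Fin m → ℝ) → 𝒮 → Fin m → ℝ) (B1 α : ℝ) (hB1 : 0 ≤ B1) (hα : 0 ≤ α)
    (hmono : ∀ S (ν ν' : Fin m → ℝ), (∀ i, ν i ≤ ν' i) → r S ν ≤ r S ν')
    (hsmooth : ∀ S (ν ν' : Fin m → ℝ),
      |r S ν' - r S ν| ≤ B1 * ∑ i, p ν S i * |ν i - ν' i|)
    (hp : ∀ ν S i, p ν S i ∈ Set.Icc (0:ℝ) 1)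
    (μ ubar c : Fin m → ℝ) (hc : ∀ i, 0 ≤ c i)
    (hub : ∀ i, μ i ≤ ubar i ∧ ubar i ≤ μ i + c i)
    (St Sstar : 𝒮)
    (hSt : ∀ S, α * r S ubar ≤ r St ubar)
    (hSstar : ∀ S, r S μ ≤ r Sstar μ) :
    α * r Sstar μ - r St μ ≤ B1 * ∑ i, p μ St i * c i :=
  stmt_11_general m r p B1 α hB1 hα hmono hsmooth hp μ ubar c hub St Sstar hSt
end
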